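/- Let T̂_U and T̂_V be trees of finite binary strings with [T̂_U] nonempty, let (T_{U,s}) and (T_{V,s}) be their canonical approximations, let Ψ be a stagewise functional, and let ℓ be the associated length-of-agreement function. Then liminf_{s→∞} ℓ(s) = limsup_{s→∞} ℓ(s) (as elements of ℕ ∪ {∞}); equivalently, lim_{s→∞} ℓ(s) exists, possibly equal to ∞. -/
import Mathlib


/-- A tree: a set of finite binary strings closed under initial segments. -/
def IsTree (T : Set (List Bool)) : Prop :=
  ∀ σ ∈ T, ∀ τ : List Bool, τ <+: σ → τ ∈ T

/-- Canonical approximation at stage `s` of a tree `T`. -/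
def canonApprox (T : Set (List Bool)) (s : ℕ) : Set (List Bool) :=
  {σ ∈ T | ∃ τ ∈ T, τ.length = s ∧ (τ <+: σ ∨ σ <+: τ)}

/-- The string of the first `n` values of `X`. -/
def restrict (X : ℕ → Bool) (n : ℕ) : List Bool :=
  (List.range n).map X

/-- The set of infinite paths through a set of strings. -/
def paths (T : Set (List Bool)) : Set (ℕ → Bool) :=
  {X | ∀ n, restrict X n ∈ T}

/-- A stagewise functional: monotone in both the stage and the input string. -/
def Stagewise (Ψ : ℕ → List Bool → List Bool) : Prop :=
  ∀ s s', s ≤ s' → ∀ σ σ' : List Bool, σ <+: σ' → Ψ s σ <+: Ψ s' σ'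

/-- The set of which the length of agreement at stage `s` is the least element. -/
def disagreeSet (TU TV : Set (List Bool)) (Ψ : ℕ → List Bool → List Bool) (s : ℕ) :
    Set ℕ :=
  {y | ∃ σ ∈ canonApprox TU s, σ.length = s ∧
      ((Ψ s σ).length < y + 1 ∨ (Ψ s σ).take (y + 1) ∉ canonApprox TV s)}

section Aux

lemma restrict_length (X : ℕ → Bool) (n : ℕ) : (restrict X n).length = n := by
  simp [restrict]

lemma restrict_prefix (X : ℕ → Bool) {m n : ℕ} (h : m ≤ n) :
    restrict X m <+: restrict X n := by
  have : restrict X m = (restrict X n).take m := by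
    simp [restrict, ← List.map_take, List.take_range, Nat.min_eq_left h]
  rw [this]
  exact List.take_prefix _ _

lemma restrict_succ (X : ℕ → Bool) (n : ℕ) :
    restrict X (n + 1) = restrict X n ++ [X n] := by
  simp [restrict, List.range_succ]

lemma take_eq_of_prefix {a b : List Bool} (h : a <+: b) {n : ℕ} (hn : n ≤ a.length) :
    b.take n = a.take n := by
  obtain ⟨t, rfl⟩ := h
  exact List.take_append_of_le_length hn

lemma prefix_comparable {a b c : List Bool} (h1 : a <+: c) (h2 : b <+: c) :
    a <+: b ∨ b <+: a := by
  rcases le_total a.length b.length with h | h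
  · exact Or.inl (List.prefix_of_prefix_length_le h1 h2 h)
  · exact Or.inr (List.prefix_of_prefix_length_le h2 h1 h)

lemma mem_canonApprox_self {T : Set (List Bool)} {σ : List Bool} (hσ : σ ∈ T)
    (hlen : σ.length = s) : σ ∈ canonApprox T s :=
  ⟨hσ, σ, hσ, hlen, Or.inl (List.prefix_refl σ)⟩

lemma canonApprox_prefix_closed {T : Set (List Bool)} (hT : IsTree T) {s : ℕ}
    {σ σ' : List Bool} (hpre : σ' <+: σ) (hσ : σ ∈ canonApprox T s) :
    σ' ∈ canonApprox T s := by
  obtain ⟨hσT, τ, hτT, hτlen, hcomp⟩ := hσ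
  refine ⟨hT σ hσT σ' hpre, τ, hτT, hτlen, ?_⟩
  rcases hcomp with h | h
  · exact prefix_comparable h hpre
  · exact Or.inr (hpre.trans h)

lemma disagreeSet_upward {TU TV : Set (List Bool)} {Ψ : ℕ → List Bool → List Bool}
    (hTV : IsTree TV) {s y y' : ℕ} (hyy : y ≤ y')
    (h : y ∈ disagreeSet TU TV Ψ s) : y' ∈ disagreeSet TU TV Ψ s := by
  obtain ⟨σ, hσ, hlen, hcond⟩ := h
  refine ⟨σ, hσ, hlen, ?_⟩
  rcases hcond with h | h
  · exact Or.inl (lt_of_lt_of_le h (by omega))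
  · refine Or.inr fun hmem => h ?_
    have hpre : (Ψ s σ).take (y + 1) <+: (Ψ s σ).take (y' + 1) := by
      have : (Ψ s σ).take (y + 1) = ((Ψ s σ).take (y' + 1)).take (y + 1) := by
        rw [List.take_take, Nat.min_eq_left (by omega)]
      rw [this]
      exact List.take_prefix _ _
    exact canonApprox_prefix_closed hTV hpre hmem

end Aux

theorem lengthOfAgreement_liminf_eq_limsup (TU TV : Set (List Bool))
    (hTU : IsTree TU) (hTV : IsTree TV) (hne : (paths TU).Nonempty)
    (Ψ : ℕ → List Bool → List Bool) (hΨ : Stagewise Ψ)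
    (ℓ : ℕ → ℕ) (hℓ : ∀ s, IsLeast (disagreeSet TU TV Ψ s) (ℓ s)) :
    Filter.liminf (fun s => (ℓ s : ℕ∞)) Filter.atTop =
      Filter.limsup (fun s => (ℓ s : ℕ∞)) Filter.atTop := by
  classical
  refine le_antisymm Filter.liminf_le_limsup ?_
  by_cases hB : Filter.liminf (fun s => (ℓ s : ℕ∞)) Filter.atTop = ⊤
  · rw [hB]; exact le_top
  obtain ⟨L, hL⟩ := WithTop.ne_top_iff_exists.mp hB
  -- ℓ s ≤ L frequently
  have hfreq : ∀ N, ∃ s, N ≤ s ∧ ℓ s ≤ L := by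
    by_contra hcon
    push_neg at hcon
    obtain ⟨N, hN⟩ := hcon
    have hev : ∀ᶠ s in Filter.atTop, ((L : ℕ∞) + 1) ≤ (ℓ s : ℕ∞) := by
      rw [Filter.eventually_atTop]
      refine ⟨N, fun s hs => ?_⟩
      have := hN s hs
      have : (L + 1 : ℕ) ≤ ℓ s := by omega
      exact_mod_cast this
    have hli := Filter.le_liminf_of_le (by isBoundedDefault) hev
    rw [← hL] at hli
    have h1 : ((L : ℕ∞)) < (L : ℕ∞) + 1 :=
      (ENat.lt_add_one_iff (by simp)).mpr le_rfl
    exact absurd (lt_of_le_of_lt hli h1) (lt_irrefl _)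
  -- key step: ℓ s ≤ L eventually
  have hev : ∃ N, ∀ s, N ≤ s → ℓ s ≤ L := by
    -- choose witnesses for stages where ℓ s ≤ L
    have hwit : ∀ s, ∃ τ, ℓ s ≤ L → τ ∈ canonApprox TU s ∧ τ.length = s ∧
        ((Ψ s τ).length < L + 1 ∨ (Ψ s τ).take (L + 1) ∉ canonApprox TV s) := by
      intro s
      by_cases h : ℓ s ≤ L
      · have hmem : L ∈ disagreeSet TU TV Ψ s := disagreeSet_upward hTV h (hℓ s).1
        obtain ⟨σ, h1, h2, h3⟩ := hmem
        exact ⟨σ, fun _ => ⟨h1, h2, h3⟩⟩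
      · exact ⟨[], fun hh => absurd hh h⟩
    choose w hw using hwit
    -- the invariant
    set P : List Bool → Prop := fun l => ∀ N, ∃ s, N ≤ s ∧ ℓ s ≤ L ∧ l <+: w s with hP
    have h0 : P [] := by
      intro N
      obtain ⟨s, hs1, hs2⟩ := hfreq N
      exact ⟨s, hs1, hs2, List.nil_prefix⟩
    have step : ∀ l, P l → ∃ b, P (l ++ [b]) := by
      intro l hl
      by_contra hc
      push_neg at hc
      have hct := hc true
      have hcf := hc false
      simp only [hP] at hct hcf
      push_neg at hct hcf
      obtain ⟨Nt, hNt⟩ := hct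
      obtain ⟨Nf, hNf⟩ := hcf
      obtain ⟨s, hs1, hs2, hpre⟩ := hl (max (max Nt Nf) (l.length + 1))
      obtain ⟨hwm, hwlen, -⟩ := hw s hs2
      obtain ⟨t, ht⟩ := hpre
      have hlt : l.length < (w s).length := by
        rw [hwlen]; omega
      match t, ht with
      | [], ht => simp [← ht] at hlt
      | b :: t', ht =>
        have hpre2 : l ++ [b] <+: w s := ⟨t', by rw [← ht]; simp⟩
        cases b with
        | true => exact hNt s (le_trans (le_trans (le_max_left _ _) (le_max_left _ _)) hs1) hs2 hpre2
        | false => exact hNf s (le_trans (le_trans (le_max_right _ _) (le_max_left _ _)) hs1) hs2 hpre2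
    -- build the path X
    let g : ℕ → {l : List Bool // P l} := fun n =>
      Nat.rec ⟨[], h0⟩
        (fun _ p => ⟨p.1 ++ [Classical.choose (step p.1 p.2)],
          Classical.choose_spec (step p.1 p.2)⟩) n
    let X : ℕ → Bool := fun n => (g (n + 1)).1.getD n false
    have hg : ∀ n, restrict X n = (g n).1 ∧ (g n).1.length = n := by
      intro n
      induction n with
      | zero =>
        refine ⟨?_, rfl⟩
        show restrict X 0 = ([] : List Bool)
        simp [restrict]
      | succ n ih =>
        have hgs : (g (n + 1)).1 = (g n).1 ++ [Classical.choose (step (g n).1 (g n).2)] := rfl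
        have hXn : X n = Classical.choose (step (g n).1 (g n).2) := by
          show (g (n + 1)).1.getD n false = _
          rw [hgs, List.getD_append_right _ _ _ _ (le_of_eq ih.2), ih.2]
          simp
        constructor
        · rw [restrict_succ, ih.1, hgs, hXn]
        · rw [hgs]; simp [ih.2]
    have hPX : ∀ n N, ∃ s, N ≤ s ∧ ℓ s ≤ L ∧ restrict X n <+: w s := by
      intro n
      have := (g n).2
      rw [← (hg n).1] at this
      exact this
    have hXU : ∀ n, restrict X n ∈ TU := by
      intro n
      obtain ⟨s, -, hsL, hpre⟩ := hPX n 0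
      exact hTU _ ((hw s hsL).1).1 _ hpre
    set F : ℕ → List Bool := fun t => Ψ t (restrict X t) with hFdef
    have hF : ∀ {t t'}, t ≤ t' → F t <+: F t' := by
      intro t t' h
      exact hΨ t t' h _ _ (restrict_prefix X h)
    by_cases hlen : ∀ t, (F t).length < L + 1
    · refine ⟨0, fun s _ => (hℓ s).2 ⟨restrict X s,
        mem_canonApprox_self (hXU s) (restrict_length X s),
        restrict_length X s, Or.inl (hlen s)⟩⟩
    · push_neg at hlen
      obtain ⟨s₀, hs₀⟩ := hlen
      set ρ : List Bool := (F s₀).take (L + 1) with hρdef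
      have hρlen : ρ.length = L + 1 := by
        rw [hρdef, List.length_take]; omega
      have hρt : ∀ t, s₀ ≤ t → (F t).take (L + 1) = ρ := by
        intro t ht
        exact take_eq_of_prefix (hF ht) hs₀
      -- ρ cannot stay forever on T_V
      have hnotQ : ¬ (ρ ∈ TV ∧ ∀ n, ∃ τ ∈ TV, τ.length = n ∧ (τ <+: ρ ∨ ρ <+: τ)) := by
        rintro ⟨hρTV, hQ⟩
        obtain ⟨s, hs, hsL, hpre⟩ := hPX s₀ s₀
        obtain ⟨hwm, hwlen, hcond⟩ := hw s hsL
        have hpre2 : F s₀ <+: Ψ s (w s) := hΨ s₀ s hs _ _ hpre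
        rcases hcond with h | h
        · have := hpre2.length_le
          omega
        · apply h
          rw [take_eq_of_prefix hpre2 hs₀]
          exact ⟨hρTV, hQ s⟩
      have hbad : ∃ n₀, ∀ t, n₀ ≤ t → ρ ∉ canonApprox TV t := by
        by_cases hρTV : ρ ∈ TV
        · have hnQ : ¬ ∀ n, ∃ τ ∈ TV, τ.length = n ∧ (τ <+: ρ ∨ ρ <+: τ) :=
            fun h => hnotQ ⟨hρTV, h⟩
          push_neg at hnQ
          obtain ⟨n, hn⟩ := hnQ
          refine ⟨max n (L + 2), fun t ht hmem => ?_⟩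
          obtain ⟨-, τ, hτTV, hτlen, hcomp⟩ := hmem
          have hnt : n ≤ t := le_trans (le_max_left _ _) ht
          have htL : L + 2 ≤ t := le_trans (le_max_right _ _) ht
          rcases hcomp with h | h
          · have := h.length_le
            rw [hτlen, hρlen] at this
            omega
          · have hcon := hn (τ.take n) (hTV _ hτTV _ (List.take_prefix _ _))
              (by rw [List.length_take, hτlen]; omega)
            rcases prefix_comparable (List.take_prefix n τ) h with h' | h'
            · exact hcon.1 h'
            · exact hcon.2 h'
        · exact ⟨0, fun t _ hmem => hρTV hmem.1⟩
      obtain ⟨n₀, hn₀⟩ := hbad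
      refine ⟨max s₀ n₀, fun s hsge => (hℓ s).2 ⟨restrict X s,
        mem_canonApprox_self (hXU s) (restrict_length X s),
        restrict_length X s, Or.inr ?_⟩⟩
      have h1 : (Ψ s (restrict X s)).take (L + 1) = ρ :=
        hρt s (le_trans (le_max_left _ _) hsge)
      rw [h1]
      exact hn₀ s (le_trans (le_max_right _ _) hsge)
  -- conclude
  obtain ⟨N, hN⟩ := hev
  have : Filter.limsup (fun s => (ℓ s : ℕ∞)) Filter.atTop ≤ (L : ℕ∞) := by
    refine Filter.limsup_le_of_le (by isBoundedDefault) ?_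
    rw [Filter.eventually_atTop]
    exact ⟨N, fun s hs => by exact_mod_cast hN s hs⟩
  rw [← hL]
  exact this
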